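/- Failure of hypergraph-independence for nested knowledge with forwarding: Let N = {i,j,k,l}, H the line graph with edges {l,k},{k,j},{j,i}, p ∈ At_l, V = {p}, and M = {(l,{l,k},p),(k,{k,j},p),(j,{j,i},p)}. Then (V,M) is an H-compliant forwarding state with (V,M) ⊨_H K_i K_k p but (V,M) ⊭ K_i K_k p (complete-hypergraph semantics); moreover (V,M) ⊭_H C_{{i,k}} p. -/

import Mathlib

structure Msg (P A : Type) where
  sender : P
  grp : Set P
  fact : A

inductive Form (P A : Type) where
  | atom : A → Form P A
  | neg  : Form P A → Form P A
  | and  : Form P A → Form P A → Form P A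
  | or   : Form P A → Form P A → Form P A
  | ck   : Set P → Form P A → Form P A

/-- The negation-free (positive) fragment L⁺. -/
def Positive {P A : Type} : Form P A → Prop
  | .atom _ => True
  | .neg _ => False
  | .and φ ψ => Positive φ ∧ Positive ψ
  | .or φ ψ => Positive φ ∧ Positive ψ
  | .ck _ φ => Positive φ

/-- Atoms occurring in a formula. -/
def FactsF {P A : Type} : Form P A → Set A
  | .atom p => {p}
  | .neg φ => FactsF φ
  | .and φ ψ => FactsF φ ∪ FactsF ψ
  | .or φ ψ => FactsF φ ∪ FactsF ψ
  | .ck _ φ => FactsF φ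

/-- Facts occurring in a set of messages. -/
def Facts {P A : Type} (M : Set (Msg P A)) : Set A := {p | ∃ m ∈ M, m.fact = p}

/-- All messages are H-compliant. -/
def HComp {P A : Type} (H : Set (Set P)) (M : Set (Msg P A)) : Prop :=
  ∀ m ∈ M, m.grp ∈ H

/-- (j,B,p) ⤳ (i,A,p): p ∉ At_i and i ∈ B. -/
def leadsto {P A : Type} (owner : A → P) (m m' : Msg P A) : Prop :=
  m'.fact = m.fact ∧ owner m'.fact ≠ m'.sender ∧ m'.sender ∈ m.grp

/-- An explanation of a message m in (V,M): a non-circular ⤳-chain of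
    p-messages in M starting at a player who initially knows p = m.fact
    and ending at m. -/
def Explains {P A : Type} (owner : A → P) (V : Set A) (M : Set (Msg P A))
    (m : Msg P A) : Prop :=
  ∃ L : List (Msg P A),
    (∀ x ∈ L, x ∈ M) ∧
    List.Chain' (leadsto owner) L ∧
    (L.map Msg.sender).Nodup ∧
    (∀ x ∈ L, x.fact = m.fact) ∧
    (∃ m₀, L.head? = some m₀ ∧ owner m₀.fact = m₀.sender ∧ m₀.fact ∈ V) ∧
    L.getLast? = some m

/-- A forwarding state: every message has a sender in its group and an explanation. -/
def FwState {P A : Type} (owner : A → P) (V : Set A) (M : Set (Msg P A)) : Prop :=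
  ∀ m ∈ M, m.sender ∈ m.grp ∧ Explains owner V M m

/-- Indistinguishability for player i: equality of (V_i, M_i). -/
def indist {P A : Type} (owner : A → P) (i : P)
    (s t : Set A × Set (Msg P A)) : Prop :=
  {p ∈ s.1 | owner p = i} = {p ∈ t.1 | owner p = i} ∧
  {m ∈ s.2 | i ∈ m.grp} = {m ∈ t.2 | i ∈ m.grp}

/-- ∼_G: transitive closure of the union of the ∼_i, i ∈ G. -/
def reach {P A : Type} (owner : A → P) (G : Set P) :
    Set A × Set (Msg P A) → Set A × Set (Msg P A) → Prop :=
  Relation.TransGen (fun s t => ∃ i ∈ G, indist owner i s t)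

/-- Semantics ⊨_H (forwarding setting): C_G quantifies over H-compliant
    forwarding states. -/
def sat {P A : Type} (owner : A → P) (H : Set (Set P)) :
    Form P A → Set A → Set (Msg P A) → Prop
  | .atom p, V, _ => p ∈ V
  | .neg φ, V, M => ¬ sat owner H φ V M
  | .and φ ψ, V, M => sat owner H φ V M ∧ sat owner H ψ V M
  | .or φ ψ, V, M => sat owner H φ V M ∨ sat owner H ψ V M
  | .ck G φ, V, M => ∀ V' M', FwState owner V' M' → HComp H M' →
      reach owner G (V, M) (V', M') → sat owner H φ V' M'

/-- The complete hypergraph: all nonempty subsets of players. -/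
def completeH (P : Type) : Set (Set P) := {B | B.Nonempty}

/-!
Under `H`, every forwarding state that `i` cannot tell apart from `(V, M)` still contains
`j`'s message to `{j, i}`. Its explanation starts with a message from `l`, the owner of `p`,
whose group is an edge of `H` through `l`, i.e. `{l, k}`; the next hop is therefore a message
sent by `k`, which `k` sees in every state it cannot distinguish, and whose explanation forces
`p` to be true there. With all groups allowed, `l` can instead send `p` straight to `{l, j}`,
bypassing `k`, and `k` then cannot tell that state from the empty one. Common knowledge fails
already under `H`: dropping the messages `i` does not see, and then the remaining one, which
`k` does not see, leads via `∼_i` and `∼_k` to the empty state.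
-/

section Forwarding

variable {P A : Type} {owner : A → P}

lemma indist_of_forall {i : P} {s t : Set A × Set (Msg P A)}
    (hV : ∀ q, owner q = i → (q ∈ s.1 ↔ q ∈ t.1))
    (hM : ∀ m : Msg P A, i ∈ m.grp → (m ∈ s.2 ↔ m ∈ t.2)) :
    indist owner i s t :=
  ⟨Set.ext fun q => and_congr_left (hV q), Set.ext fun m => and_congr_left (hM m)⟩

lemma indist_of_reach_singleton {i : P} {s t : Set A × Set (Msg P A)}
    (h : reach owner {i} s t) : indist owner i s t := by
  induction h with
  | single h =>
    obtain ⟨_, rfl, h⟩ := h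
    exact h
  | tail _ h ih =>
    obtain ⟨_, rfl, h⟩ := h
    exact ⟨ih.1.trans h.1, ih.2.trans h.2⟩

lemma mem_of_reach_singleton {i : P} {s t : Set A × Set (Msg P A)}
    (h : reach owner {i} s t) {m : Msg P A} (hm : m ∈ s.2) (hi : i ∈ m.grp) : m ∈ t.2 :=
  ((indist_of_reach_singleton h).2.subset ⟨hm, hi⟩).1

lemma Explains.fact_mem {V : Set A} {M : Set (Msg P A)} {m : Msg P A}
    (h : Explains owner V M m) : m.fact ∈ V := by
  obtain ⟨L, -, -, -, hfact, ⟨m₀, hhead, -, hm₀⟩, -⟩ := h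
  rwa [← hfact m₀ (List.mem_of_mem_head? hhead)]

lemma Explains.exists_first_hop {V : Set A} {M : Set (Msg P A)} {m : Msg P A}
    (h : Explains owner V M m) (hm : owner m.fact ≠ m.sender) :
    ∃ a ∈ M, ∃ b ∈ M, a.fact = m.fact ∧ a.sender = owner m.fact ∧ leadsto owner a b := by
  obtain ⟨L, hLM, hchain, -, hfact, ⟨a, hhead, ha, -⟩, hlast⟩ := h
  match L, hhead with
  | [_], rfl =>
    obtain rfl : a = m := by simpa using hlast
    exact absurd ha hm
  | _ :: b :: _, rfl =>
    have hab := (List.isChain_cons_cons.1 hchain).1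
    have haf := hfact a (by simp)
    exact ⟨a, hLM a (by simp), b, hLM b (by simp), haf, by rw [← ha, haf], hab⟩

lemma FwState.exists_hop_from_owner {H : Set (Set P)} {V : Set A} {M : Set (Msg P A)}
    (hfw : FwState owner V M) (hH : HComp H M) {m : Msg P A} (hm : m ∈ M)
    (hfwd : owner m.fact ≠ m.sender) :
    ∃ B ∈ H, owner m.fact ∈ B ∧
      ∃ b ∈ M, b.fact = m.fact ∧ b.sender ∈ B ∧ b.sender ≠ owner m.fact ∧ b.sender ∈ b.grp := by
  obtain ⟨a, ha, b, hb, haf, has, hbf, hbo, hbB⟩ := (hfw m hm).2.exists_first_hop hfwd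
  refine ⟨a.grp, hH a ha, has ▸ (hfw a ha).1, b, hb, hbf.trans haf, hbB, ?_, (hfw b hb).1⟩
  rwa [hbf, haf, ne_comm] at hbo

lemma sat_ck_singleton_atom_of_mem (H : Set (Set P)) {V : Set A} {M : Set (Msg P A)} {k : P}
    {m : Msg P A} (hm : m ∈ M) (hk : k ∈ m.grp) :
    sat owner H (.ck {k} (.atom m.fact)) V M :=
  fun _ _ hfw _ hr => ((hfw m (mem_of_reach_singleton hr hm hk)).2).fact_mem

lemma sat_ck_atom_of_edges_subset {H H' : Set (Set P)} {V : Set A} {M : Set (Msg P A)}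
    {p : A} {k : P} (hedges : ∀ B ∈ H, owner p ∈ B → B ⊆ {owner p, k})
    (hfw : FwState owner V M) (hH : HComp H M) {m : Msg P A} (hm : m ∈ M) (hmp : m.fact = p)
    (hfwd : owner p ≠ m.sender) :
    sat owner H' (.ck {k} (.atom p)) V M := by
  subst hmp
  obtain ⟨B, hB, hoB, b, hb, hbf, hbB, hbo, hbg⟩ := hfw.exists_hop_from_owner hH hm hfwd
  have hbk : b.sender = k := (hedges B hB hoB hbB).resolve_left hbo
  exact hbf ▸ sat_ck_singleton_atom_of_mem H' hb (hbk ▸ hbg)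

lemma FwState.hComp_completeH {V : Set A} {M : Set (Msg P A)} (h : FwState owner V M) :
    HComp (completeH P) M :=
  fun m hm => ⟨m.sender, (h m hm).1⟩

lemma fwState_empty (V : Set A) : FwState owner V (∅ : Set (Msg P A)) :=
  fun _ hm => hm.elim

lemma hComp_empty (H : Set (Set P)) : HComp H (∅ : Set (Msg P A)) :=
  fun _ hm => hm.elim

lemma not_sat_ck_atom_of_reach_empty (H : Set (Set P)) {G : Set P} {V : Set A}
    {M : Set (Msg P A)} (p : A) (hr : reach owner G (V, M) (∅, ∅)) :
    ¬ sat owner H (.ck G (.atom p)) V M :=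
  fun hsat => hsat ∅ ∅ (fwState_empty ∅) (hComp_empty H) hr

lemma fwState_of_relay {V : Set A} {M : Set (Msg P A)} {p : A} (hp : p ∈ V)
    (L : List (Msg P A)) (hML : ∀ m, m ∈ M ↔ m ∈ L)
    (hfact : ∀ x ∈ L, x.fact = p) (hchain : L.IsChain (leadsto owner))
    (hnd : (L.map Msg.sender).Nodup) (hhead : ∀ a ∈ L.head?, a.sender = owner p)
    (hgrp : ∀ x ∈ L, x.sender ∈ x.grp) :
    FwState owner V M := by
  intro m hm
  rw [hML] at hm
  obtain ⟨n, hn, rfl⟩ := List.getElem_of_mem hm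
  refine ⟨hgrp _ hm, L.take (n + 1), fun x hx => (hML x).2 (List.mem_of_mem_take hx),
    hchain.take _,
    hnd.sublist ((List.take_sublist _ _).map _), ?_, ?_, ?_⟩
  · intro x hx
    rw [hfact x (List.mem_of_mem_take hx), hfact _ hm]
  · have h0 : 0 < L.length := by omega
    have hL0 : L.head? = some L[0] := List.head?_eq_getElem?.trans (List.getElem?_eq_getElem h0)
    have hf0 := hfact _ (List.getElem_mem h0)
    refine ⟨L[0], by rw [List.head?_take, if_neg n.succ_ne_zero, hL0], ?_, hf0 ▸ hp⟩
    rw [hf0, hhead _ hL0]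
  · simp [List.getLast?_take, hn]

end Forwarding

theorem fw_ck_of_H_matters_general {P A : Type} (owner : A → P)
    (i j k l : P)
    (hij : i ≠ j) (hik : i ≠ k) (hil : i ≠ l)
    (hjk : j ≠ k) (hjl : j ≠ l) (hkl : k ≠ l)
    (p : A) (hp : owner p = l)
    (H : Set (Set P)) (hH : H = {({l, k} : Set P), {k, j}, {j, i}})
    (V : Set A) (hV : V = {p})
    (M : Set (Msg P A))
    (hM : M = {⟨l, {l, k}, p⟩, ⟨k, {k, j}, p⟩, ⟨j, {j, i}, p⟩}) :
    FwState owner V M ∧ HComp H M ∧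
    sat owner H (.ck {i} (.ck {k} (.atom p))) V M ∧
    ¬ sat owner (completeH P) (.ck {i} (.ck {k} (.atom p))) V M ∧
    ¬ sat owner H (.ck {i, k} (.atom p)) V M := by
  subst hH hV hM
  have hfw : FwState owner {p} {⟨l, {l, k}, p⟩, ⟨k, {k, j}, p⟩, ⟨j, {j, i}, p⟩} := by
    refine fwState_of_relay (Set.mem_singleton p)
      [⟨l, {l, k}, p⟩, ⟨k, {k, j}, p⟩, ⟨j, {j, i}, p⟩] ?_ ?_ ?_ ?_ ?_ ?_ <;>
      simp [leadsto, hp, hkl, hjk, hkl.symm, hjl.symm, hjk.symm]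
  refine ⟨hfw, by simp [HComp], ?_, ?_, ?_⟩
  · have hedges : ∀ B ∈ ({{l, k}, {k, j}, {j, i}} : Set (Set P)), owner p ∈ B →
        B ⊆ {owner p, k} := by
      simp only [Set.mem_insert_iff, Set.mem_singleton_iff, hp]
      rintro B (rfl | rfl | rfl) hlB <;> grind
    exact fun V' M' hfw' hH' hr => sat_ck_atom_of_edges_subset hedges hfw' hH'
      (mem_of_reach_singleton hr (m := ⟨j, {j, i}, p⟩) (by simp) (by simp)) rfl (hp ▸ hjl.symm)
  · intro hsat
    have hfw' : FwState owner {p} {⟨l, {l, j}, p⟩, ⟨j, {j, i}, p⟩} := by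
      refine fwState_of_relay (Set.mem_singleton p)
        [⟨l, {l, j}, p⟩, ⟨j, {j, i}, p⟩] ?_ ?_ ?_ ?_ ?_ ?_ <;> simp [leadsto, hp, hjl, hjl.symm]
    refine not_sat_ck_atom_of_reach_empty _ p ?_ (hsat _ _ hfw' hfw'.hComp_completeH ?_)
    · exact .single ⟨k, rfl, indist_of_forall (by grind) (by grind)⟩
    · exact .single ⟨i, rfl, indist_of_forall (by grind) (by grind)⟩
  -- The intermediate state `(∅, {⟨j, {j, i}, p⟩})` is not a forwarding state; only the end of a
  -- `∼_G`-chain has to be one.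
  · exact not_sat_ck_atom_of_reach_empty _ p
      (.tail (b := ((∅ : Set A), {⟨j, {j, i}, p⟩}))
        (.single ⟨i, by simp, indist_of_forall (by grind) (by grind)⟩)
        ⟨k, by simp, indist_of_forall (by grind) (by grind)⟩)

theorem fw_ck_of_H_matters {P A : Type} [Fintype P] (owner : A → P)
    (i j k l : P)
    (hij : i ≠ j) (hik : i ≠ k) (hil : i ≠ l)
    (hjk : j ≠ k) (hjl : j ≠ l) (hkl : k ≠ l)
    (hall : ∀ x : P, x = i ∨ x = j ∨ x = k ∨ x = l)
    (p : A) (hp : owner p = l)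
    (H : Set (Set P)) (hH : H = {({l, k} : Set P), {k, j}, {j, i}})
    (V : Set A) (hV : V = {p})
    (M : Set (Msg P A))
    (hM : M = {⟨l, {l, k}, p⟩, ⟨k, {k, j}, p⟩, ⟨j, {j, i}, p⟩}) :
    FwState owner V M ∧ HComp H M ∧
    sat owner H (.ck {i} (.ck {k} (.atom p))) V M ∧
    ¬ sat owner (completeH P) (.ck {i} (.ck {k} (.atom p))) V M ∧
    ¬ sat owner H (.ck {i, k} (.atom p)) V M :=
  fw_ck_of_H_matters_general owner i j k l hij hik hil hjk hjl hkl p hp H hH V hV M hM
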